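/- arXiv:2602.10519 — 3 statements merged into one kernel-verified Lean document; each statement's English description precedes it below -/
import Mathlib

section
/- Let R be a commutative ring with no nonzero nilpotent ideals (equivalently, reduced in the sense that the nilradical is zero), graded by a group G with homogeneous components R_g, and assume R has no nontrivial ideals (R is a field, or more generally simple as a ring). Suppose the support H₀ = {g ∈ G : R_g ≠ 0} is finite. Then H₀ is a subgroup of G. -/
/-- Let `R` be a commutative unital ring with no nonzero nilpotent ideals
(i.e. reduced), simple (its only ideals are `0` and `R`), graded by a group
`G` with homogeneous components `A g` (`A g · A h ⊆ A (g*h)`, `1 ∈ A e`).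
If the support `H₀ = {g : A g ≠ 0}` is finite, then `H₀` is a subgroup of
`G`. -/
theorem stmt10 {R : Type} [CommRing R] [Nontrivial R] [IsReduced R]
    {G : Type} [Group G] [DecidableEq G]
    (hsimple : ∀ I : Ideal R, I = ⊥ ∨ I = ⊤)
    (A : G → Submodule ℤ R)
    (hinternal : DirectSum.IsInternal A)
    (hone : (1 : R) ∈ A 1)
    (hmul : ∀ g h : G, A g * A h ≤ A (g * h))
    (hfin : {g : G | A g ≠ ⊥}.Finite) :
    ∃ H : Subgroup G, (H : Set G) = {g : G | A g ≠ ⊥} := by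
  -- A simple commutative ring has no zero divisors
  have hnzd : ∀ x y : R, x ≠ 0 → y ≠ 0 → x * y ≠ 0 := by
    intro x y hx hy hxy
    rcases hsimple (Ideal.span {x}) with h | h
    · exact hx (Ideal.span_singleton_eq_bot.mp h)
    · have h1 : (1 : R) ∈ Ideal.span {x} := h ▸ Submodule.mem_top
      obtain ⟨r, hr⟩ := Ideal.mem_span_singleton'.mp h1
      apply hy
      calc y = r * x * y := by rw [hr, one_mul]
        _ = r * (x * y) := by ring
        _ = 0 := by rw [hxy, mul_zero]
  have hmem : ∀ g : G, A g ≠ ⊥ ↔ ∃ x : R, x ∈ A g ∧ x ≠ 0 := by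
    intro g; rw [Submodule.ne_bot_iff]
  have hone' : A (1 : G) ≠ ⊥ := (hmem 1).mpr ⟨1, hone, one_ne_zero⟩
  have hmulS : ∀ g h : G, A g ≠ ⊥ → A h ≠ ⊥ → A (g * h) ≠ ⊥ := by
    intro g h hg hh
    obtain ⟨x, hx, hx0⟩ := (hmem g).mp hg
    obtain ⟨y, hy, hy0⟩ := (hmem h).mp hh
    exact (hmem _).mpr ⟨x * y, hmul g h (Submodule.mul_mem_mul hx hy), hnzd x y hx0 hy0⟩
  have hpow : ∀ (g : G), A g ≠ ⊥ → ∀ (k : ℕ), A (g ^ k) ≠ ⊥ := by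
    intro g hg k
    induction k with
    | zero => simpa using hone'
    | succ n ih => rw [pow_succ]; exact hmulS _ _ ih hg
  have hinv : ∀ g : G, A g ≠ ⊥ → A g⁻¹ ≠ ⊥ := by
    intro g hg
    have hni : ¬ Function.Injective (fun k : ℕ => g ^ k) := by
      intro hinj
      exact (Set.infinite_of_injective_forall_mem hinj
        (fun k => hpow g hg k)) hfin
    rw [Function.not_injective_iff] at hni
    obtain ⟨m, n, hmn, hne⟩ := hni
    wlog hlt : n < m generalizing m n
    · exact this n m hmn.symm hne.symm (by omega)
    have h1 : g ^ (m - n) * g ^ n = g ^ n := by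
      rw [← pow_add, Nat.sub_add_cancel hlt.le, hmn]
    have h2 : g ^ (m - n) = 1 := by
      have := mul_right_cancel (a := g ^ (m - n)) (b := g ^ n) (c := 1)
        (by rw [h1, one_mul])
      exact this
    have h3 : g⁻¹ = g ^ (m - n - 1) := by
      apply inv_eq_of_mul_eq_one_right
      rw [← pow_succ']
      have : m - n - 1 + 1 = m - n := by omega
      rw [this, h2]
    rw [h3]
    exact hpow g hg _
  exact ⟨{ carrier := {g : G | A g ≠ ⊥},
           one_mem' := hone',
           mul_mem' := fun ha hb => hmulS _ _ ha hb,
           inv_mem' := fun ha => hinv _ ha }, rfl⟩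
end

section
/- Set α = [3]_7 + [5]_7 where [k]_7 = sin(kπ/7)/sin(π/7). The complete list of real numbers of the form r + sα with r, s nonnegative integers, satisfying r + sα ≤ √(49(7+15[3]_7+12[5]_7)) (≈ 55.2636) and whose field norm over ℚ is ±7^n for some integer n ≥ 0, is: 1, 7, 49, α, 1+α, 1+2α, 1+3α, 2+3α, 3+4α, 2+5α, 7α, 7+7α. -/
open Real

/-- The quantum number `[k]_7 = sin(kπ/7)/sin(π/7)`. -/
noncomputable def qnum7 (k : ℕ) : ℝ := sin (k * π / 7) / sin (π / 7)

/-- `α = [3]_7 + [5]_7`, an algebraic integer generating the totally real cubic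
field `ℚ(cos(π/7))`. -/
noncomputable def alpha : ℝ := qnum7 3 + qnum7 5

/-- The images of `α` under the three real embeddings of `ℚ(cos(π/7))`, as a
function of the conjugates `c = 2cos(kπ/7)` (`k = 1, 3, 5`) of `2cos(π/7)`:
since `[3]_7 = c² - 1` and `[5]_7 = c`, the conjugates of `α` are `c² + c - 1`. -/
noncomputable def alphaConj (c : ℝ) : ℝ := c ^ 2 + c - 1

/-- The field norm over `ℚ` of `r + s·α`: the product of the three Galois
conjugates. -/
noncomputable def nrm (r s : ℝ) : ℝ :=
  (r + s * alphaConj (2 * cos (π / 7))) *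
  (r + s * alphaConj (2 * cos (3 * π / 7))) *
  (r + s * alphaConj (2 * cos (5 * π / 7)))

private lemma cubic_of_cos {θ : ℝ} (h4 : Real.cos (4 * θ) = -Real.cos (3 * θ))
    (hne : Real.cos θ ≠ -1) :
    (2 * Real.cos θ) ^ 3 - (2 * Real.cos θ) ^ 2 - 2 * (2 * Real.cos θ) + 1 = 0 := by
  have e2 : Real.cos (2 * θ) = 2 * Real.cos θ ^ 2 - 1 := Real.cos_two_mul θ
  have e4 : Real.cos (4 * θ) = 2 * Real.cos (2 * θ) ^ 2 - 1 := by
    rw [show (4 : ℝ) * θ = 2 * (2 * θ) by ring, Real.cos_two_mul]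
  have e3 : Real.cos (3 * θ) = 4 * Real.cos θ ^ 3 - 3 * Real.cos θ := Real.cos_three_mul θ
  set x := Real.cos θ with hx
  have key : (x + 1) * (8 * x ^ 3 - 4 * x ^ 2 - 4 * x + 1) = 0 := by
    rw [e2] at e4
    rw [e4, e3] at h4
    linear_combination h4
  have hx1 : x + 1 ≠ 0 := fun h => hne (by linarith)
  have h0 := (mul_eq_zero.mp key).resolve_left hx1
  linear_combination h0

private lemma cos_ne_neg_one {θ : ℝ} (h0 : 0 ≤ θ) (h1 : θ < π) : Real.cos θ ≠ -1 := by
  have := Real.cos_lt_cos_of_nonneg_of_le_pi h0 le_rfl h1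
  rw [Real.cos_pi] at this
  linarith

private lemma cubic_a :
    (2 * cos (π / 7)) ^ 3 - (2 * cos (π / 7)) ^ 2 - 2 * (2 * cos (π / 7)) + 1 = 0 := by
  have hpi := Real.pi_pos
  apply cubic_of_cos
  · rw [show (4 : ℝ) * (π / 7) = π - 3 * (π / 7) by ring, Real.cos_pi_sub]
  · exact cos_ne_neg_one (by positivity) (by linarith)

private lemma cubic_b :
    (2 * cos (3 * π / 7)) ^ 3 - (2 * cos (3 * π / 7)) ^ 2 - 2 * (2 * cos (3 * π / 7)) + 1 = 0 := by
  have hpi := Real.pi_pos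
  apply cubic_of_cos
  · rw [show (4 : ℝ) * (3 * π / 7) = 2 * π - 2 * π / 7 by ring,
      show (3 : ℝ) * (3 * π / 7) = 2 * π / 7 + π by ring,
      Real.cos_two_pi_sub, Real.cos_add_pi, neg_neg]
  · exact cos_ne_neg_one (by positivity) (by linarith)

private lemma cubic_d :
    (2 * cos (5 * π / 7)) ^ 3 - (2 * cos (5 * π / 7)) ^ 2 - 2 * (2 * cos (5 * π / 7)) + 1 = 0 := by
  have hpi := Real.pi_pos
  apply cubic_of_cos
  · rw [show (4 : ℝ) * (5 * π / 7) = 6 * π / 7 + 2 * π by ring,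
      show (3 : ℝ) * (5 * π / 7) = π / 7 + 2 * π by ring,
      Real.cos_add_two_pi, Real.cos_add_two_pi,
      show (6 : ℝ) * π / 7 = π - π / 7 by ring, Real.cos_pi_sub]
  · exact cos_ne_neg_one (by positivity) (by linarith)

private lemma order_abd :
    2 * cos (3 * π / 7) < 2 * cos (π / 7) ∧ 2 * cos (5 * π / 7) < 2 * cos (3 * π / 7) := by
  have hpi := Real.pi_pos
  constructor
  · have := Real.cos_lt_cos_of_nonneg_of_le_pi (x := π / 7) (y := 3 * π / 7)
      (by positivity) (by linarith) (by linarith)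
    linarith
  · have := Real.cos_lt_cos_of_nonneg_of_le_pi (x := 3 * π / 7) (y := 5 * π / 7)
      (by positivity) (by linarith) (by linarith)
    linarith

/-- The elementary symmetric functions of the three conjugates. -/
private lemma sym_abd :
    2 * cos (π / 7) + 2 * cos (3 * π / 7) + 2 * cos (5 * π / 7) = 1 ∧
    (2 * cos (π / 7)) * (2 * cos (3 * π / 7)) + (2 * cos (π / 7)) * (2 * cos (5 * π / 7)) +
      (2 * cos (3 * π / 7)) * (2 * cos (5 * π / 7)) = -2 ∧
    (2 * cos (π / 7)) * (2 * cos (3 * π / 7)) * (2 * cos (5 * π / 7)) = -1 := by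
  have ha := cubic_a
  have hb := cubic_b
  have hd := cubic_d
  obtain ⟨hab, hbd⟩ := order_abd
  set a := 2 * cos (π / 7) with ha'
  set b := 2 * cos (3 * π / 7) with hb'
  set d := 2 * cos (5 * π / 7) with hd'
  have hab' : a - b ≠ 0 := sub_ne_zero.mpr (ne_of_gt hab)
  have hbd' : b - d ≠ 0 := sub_ne_zero.mpr (ne_of_gt hbd)
  have had' : a - d ≠ 0 := sub_ne_zero.mpr (ne_of_gt (hbd.trans hab))
  have k1 : (a - b) * (a ^ 2 + a * b + b ^ 2 - a - b - 2) = 0 := by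
    linear_combination ha - hb
  have k2 : (b - d) * (b ^ 2 + b * d + d ^ 2 - b - d - 2) = 0 := by
    linear_combination hb - hd
  have h1 : a ^ 2 + a * b + b ^ 2 - a - b - 2 = 0 := (mul_eq_zero.mp k1).resolve_left hab'
  have h2 : b ^ 2 + b * d + d ^ 2 - b - d - 2 = 0 := (mul_eq_zero.mp k2).resolve_left hbd'
  have k3 : (a - d) * (a + b + d - 1) = 0 := by linear_combination h1 - h2
  have hE1 : a + b + d = 1 := by
    have := (mul_eq_zero.mp k3).resolve_left had'
    linarith
  have hE2 : a * b + a * d + b * d = -2 := by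
    linear_combination (d + b) * hE1 - h2
  have hE3 : a * b * d = -1 := by
    linear_combination (b * d) * hE1 - d * h2 + hd
  exact ⟨hE1, hE2, hE3⟩

/-- The norm of `r + s α` is `r³ + 3r²s − 4rs² + s³`. -/
private lemma nrm_eq (r s : ℝ) : nrm r s = r ^ 3 + 3 * r ^ 2 * s - 4 * r * s ^ 2 + s ^ 3 := by
  obtain ⟨hE1, hE2, hE3⟩ := sym_abd
  set a := 2 * cos (π / 7)
  set b := 2 * cos (3 * π / 7)
  set d := 2 * cos (5 * π / 7)
  have heb1 : alphaConj a + alphaConj b + alphaConj d = 3 := by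
    unfold alphaConj
    linear_combination (2 + (a + b + d)) * hE1 + (-2 : ℝ) * hE2
  have heb2 : alphaConj a * alphaConj b + alphaConj a * alphaConj d +
      alphaConj b * alphaConj d = -4 := by
    unfold alphaConj
    linear_combination ((-4) + (-2) * (a * b * d) + (a * b + a * d + b * d) + (-2) * (a + b + d)) * hE1
      + (4 + (a * b + a * d + b * d)) * hE2 + (-5 : ℝ) * hE3
  have heb3 : alphaConj a * alphaConj b * alphaConj d = 1 := by
    unfold alphaConj
    linear_combination (2 + 3 * (a * b * d) + (-1) * (a * b + a * d + b * d) + (a + b + d)) * hE1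
      + ((-2) + (a * b * d) + (-1) * (a * b + a * d + b * d)) * hE2 + (4 + (a * b * d)) * hE3
  unfold nrm
  linear_combination r ^ 2 * s * heb1 + r * s ^ 2 * heb2 + s ^ 3 * heb3

/-- Bounds on `c = 2cos(π/7)`. -/
private lemma c_bounds : 1.8 < 2 * cos (π / 7) ∧ 2 * cos (π / 7) < 1.802 := by
  have hpi := Real.pi_pos
  set c := 2 * cos (π / 7) with hc'
  have ha := cubic_a
  rw [← hc'] at ha
  have hgt1 : 1 < c := by
    have h3 : cos (π / 3) = 1 / 2 := Real.cos_pi_div_three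
    have := Real.cos_lt_cos_of_nonneg_of_le_pi (x := π / 7) (y := π / 3)
      (by positivity) (by linarith) (by linarith)
    rw [h3] at this
    simp only [hc']
    linarith
  have hlt2 : c < 2 := by
    have := Real.cos_lt_cos_of_nonneg_of_le_pi (x := 0) (y := π / 7)
      le_rfl (by linarith) (by positivity)
    rw [Real.cos_zero] at this
    simp only [hc']
    linarith
  constructor
  · nlinarith [ha, hgt1, hlt2, sq_nonneg (c - 1.8), sq_nonneg (c - 1), sq_nonneg (c + 1)]
  · nlinarith [ha, hgt1, hlt2, sq_nonneg (c - 1.802), sq_nonneg (c - 2), sq_nonneg (c - 1)]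

/-- `[3]_7 = c² - 1` and `[5]_7 = c`. -/
private lemma qnum_eq : qnum7 3 = (2 * cos (π / 7)) ^ 2 - 1 ∧ qnum7 5 = 2 * cos (π / 7) := by
  have hpi := Real.pi_pos
  have hs : sin (π / 7) ≠ 0 :=
    ne_of_gt (Real.sin_pos_of_pos_of_lt_pi (by positivity) (by linarith))
  have hpyth := Real.sin_sq_add_cos_sq (π / 7)
  have h5 : sin ((5 : ℕ) * π / 7) = 2 * sin (π / 7) * cos (π / 7) := by
    rw [show ((5 : ℕ) : ℝ) * π / 7 = π - 2 * (π / 7) by push_cast; ring, Real.sin_pi_sub,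
      Real.sin_two_mul]
  have h3 : sin ((3 : ℕ) * π / 7) = 3 * sin (π / 7) - 4 * sin (π / 7) ^ 3 := by
    rw [show ((3 : ℕ) : ℝ) * π / 7 = 3 * (π / 7) by push_cast; ring, Real.sin_three_mul]
  constructor
  · unfold qnum7
    rw [h3, div_eq_iff hs]
    linear_combination (-4 * sin (π / 7)) * hpyth
  · unfold qnum7
    rw [h5, div_eq_iff hs]
    ring

/-- `α = c² + c − 1` where `c = 2cos(π/7)`. -/
private lemma alpha_eq : alpha = (2 * cos (π / 7)) ^ 2 + 2 * cos (π / 7) - 1 := by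
  obtain ⟨h3, h5⟩ := qnum_eq
  unfold alpha
  rw [h3, h5]
  ring

set_option synthInstance.maxSize 2000 in
set_option synthInstance.maxHeartbeats 1000000 in
set_option maxHeartbeats 4000000 in
/-- The finite decidable check: all pairs in the box whose norm divides `7^7`
are in the list (plus the spurious `(9,13)` which violates the size bound). -/
private lemma dec_check : ∀ r < 56, ∀ s < 14,
    (((r : ℤ) ^ 3 + 3 * (r : ℤ) ^ 2 * (s : ℤ) - 4 * (r : ℤ) * (s : ℤ) ^ 2 + (s : ℤ) ^ 3).natAbs
        ∣ 7 ^ 7) →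
    (r, s) ∈ ([(1, 0), (7, 0), (49, 0), (0, 1), (1, 1), (1, 2), (1, 3), (2, 3),
      (3, 4), (2, 5), (0, 7), (7, 7), (9, 13)] : List (ℕ × ℕ)) := by decide

set_option maxHeartbeats 2000000 in
/-- The complete list of numbers `r + s·α` (`r, s` nonnegative integers) which
are at most `√(49(7+15[3]_7+12[5]_7)) ≈ 55.2636` and whose field norm over `ℚ`
is `±7ⁿ` for some `n ≥ 0`:
`1, 7, 49, α, 1+α, 1+2α, 1+3α, 2+3α, 3+4α, 2+5α, 7α, 7+7α`. -/
theorem stmt12 (r s : ℕ) :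
    ((r : ℝ) + (s : ℝ) * alpha ≤
        Real.sqrt (49 * (7 + 15 * qnum7 3 + 12 * qnum7 5)) ∧
      ∃ n : ℕ, |nrm (r : ℝ) (s : ℝ)| = 7 ^ n) ↔
    (r, s) ∈ ([(1, 0), (7, 0), (49, 0), (0, 1), (1, 1), (1, 2), (1, 3), (2, 3),
      (3, 4), (2, 5), (0, 7), (7, 7)] : List (ℕ × ℕ)) := by
  have hpi := Real.pi_pos
  obtain ⟨hq3, hq5⟩ := qnum_eq
  obtain ⟨hc1, hc2⟩ := c_bounds
  set c := 2 * cos (π / 7) with hc'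
  have halpha : alpha = c ^ 2 + c - 1 := alpha_eq
  have hXeq : 49 * (7 + 15 * qnum7 3 + 12 * qnum7 5) = 735 * c ^ 2 + 588 * c - 392 := by
    rw [hq3, hq5]; ring
  have hX0 : (0 : ℝ) ≤ 49 * (7 + 15 * qnum7 3 + 12 * qnum7 5) := by
    rw [hXeq]; nlinarith
  have hXlt : 49 * (7 + 15 * qnum7 3 + 12 * qnum7 5) < 56 ^ 2 := by
    rw [hXeq]; nlinarith
  have halpha_gt : (4.04 : ℝ) < alpha := by rw [halpha]; nlinarith
  have halpha_lt : alpha < 4.05 := by rw [halpha]; nlinarith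
  have hnrmN : nrm (r : ℝ) (s : ℝ) =
      (((r : ℤ) ^ 3 + 3 * (r : ℤ) ^ 2 * (s : ℤ) - 4 * (r : ℤ) * (s : ℤ) ^ 2 + (s : ℤ) ^ 3 : ℤ) : ℝ) := by
    rw [nrm_eq]; push_cast; ring
  constructor
  · rintro ⟨hbound, n, hn⟩
    set N : ℤ := (r : ℤ) ^ 3 + 3 * (r : ℤ) ^ 2 * (s : ℤ) - 4 * (r : ℤ) * (s : ℤ) ^ 2 + (s : ℤ) ^ 3
      with hN'
    -- the bound gives r + s·alpha < 56
    have hlt56 : (r : ℝ) + (s : ℝ) * alpha < 56 := by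
      have h1 : Real.sqrt (49 * (7 + 15 * qnum7 3 + 12 * qnum7 5)) < 56 := by
        rw [Real.sqrt_lt' (by norm_num)]
        exact hXlt
      linarith
    have hr55 : r ≤ 55 := by
      by_contra h
      push_neg at h
      have : (56 : ℝ) ≤ (r : ℝ) := by exact_mod_cast h
      have hs0 : (0 : ℝ) ≤ (s : ℝ) * alpha := by positivity
      linarith
    have hs13 : s ≤ 13 := by
      by_contra h
      push_neg at h
      have h14 : (14 : ℝ) ≤ (s : ℝ) := by exact_mod_cast h
      have : (14 : ℝ) * 4.04 ≤ (s : ℝ) * alpha := by nlinarith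
      have hr0 : (0 : ℝ) ≤ (r : ℝ) := by positivity
      linarith
    -- turn the norm condition into a divisibility statement
    have hnat : N.natAbs = 7 ^ n := by
      have habs : |nrm (r : ℝ) (s : ℝ)| = ((N.natAbs : ℕ) : ℝ) := by
        rw [hnrmN, ← Int.cast_abs, Int.abs_eq_natAbs, Int.cast_natCast]
      have : ((N.natAbs : ℕ) : ℝ) = ((7 ^ n : ℕ) : ℝ) := by
        rw [← habs, hn]; push_cast; ring
      exact_mod_cast this
    have hNbound : N.natAbs < 7 ^ 8 := by
      have h1 : N ≤ 7 ^ 8 - 1 := by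
        have hr : (r : ℤ) ≤ 55 := by exact_mod_cast hr55
        have hs : (s : ℤ) ≤ 13 := by exact_mod_cast hs13
        have hr0 : (0 : ℤ) ≤ (r : ℤ) := Int.natCast_nonneg r
        have hs0 : (0 : ℤ) ≤ (s : ℤ) := Int.natCast_nonneg s
        rw [hN']
        nlinarith
      have h2 : -(7 ^ 8 - 1) ≤ N := by
        have hr : (r : ℤ) ≤ 55 := by exact_mod_cast hr55
        have hs : (s : ℤ) ≤ 13 := by exact_mod_cast hs13
        have hr0 : (0 : ℤ) ≤ (r : ℤ) := Int.natCast_nonneg r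
        have hs0 : (0 : ℤ) ≤ (s : ℤ) := Int.natCast_nonneg s
        rw [hN']
        nlinarith
      have habs : |N| ≤ 7 ^ 8 - 1 := abs_le.mpr ⟨h2, h1⟩
      have : ((N.natAbs : ℕ) : ℤ) < 7 ^ 8 := by
        rw [← Int.abs_eq_natAbs]; omega
      exact_mod_cast this
    have hn7 : n ≤ 7 := by
      by_contra h
      push_neg at h
      have : 7 ^ 8 ≤ 7 ^ n := Nat.pow_le_pow_right (by norm_num) h
      omega
    have hdvd : N.natAbs ∣ 7 ^ 7 := by
      rw [hnat]
      exact pow_dvd_pow 7 hn7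
    have hmem := dec_check r (by omega) s (by omega) hdvd
    have h913 : ¬(r = 9 ∧ s = 13) := by
      rintro ⟨rfl, rfl⟩
      have : (9 : ℝ) + 13 * alpha < 56 := by push_cast at hlt56; linarith
      linarith
    simp only [List.mem_cons, List.not_mem_nil, or_false, Prod.mk.injEq] at hmem
    rcases hmem with ⟨rfl, rfl⟩ | ⟨rfl, rfl⟩ | ⟨rfl, rfl⟩ | ⟨rfl, rfl⟩ | ⟨rfl, rfl⟩ | ⟨rfl, rfl⟩ |
      ⟨rfl, rfl⟩ | ⟨rfl, rfl⟩ | ⟨rfl, rfl⟩ | ⟨rfl, rfl⟩ | ⟨rfl, rfl⟩ | ⟨rfl, rfl⟩ | ⟨rfl, rfl⟩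
    · decide
    · decide
    · decide
    · decide
    · decide
    · decide
    · decide
    · decide
    · decide
    · decide
    · decide
    · decide
    · exact absurd ⟨rfl, rfl⟩ h913
  · intro hmem
    have hboundgen : ∀ x : ℝ, 0 ≤ x → x ^ 2 ≤ 49 * (7 + 15 * qnum7 3 + 12 * qnum7 5) →
        x ≤ Real.sqrt (49 * (7 + 15 * qnum7 3 + 12 * qnum7 5)) := fun x _ h =>
      Real.le_sqrt_of_sq_le h
    simp only [List.mem_cons, List.not_mem_nil, or_false, Prod.mk.injEq] at hmem
    have hXgt : (3047 : ℝ) ≤ 49 * (7 + 15 * qnum7 3 + 12 * qnum7 5) := by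
      rw [hXeq]; nlinarith
    rcases hmem with ⟨h1, h2⟩ | ⟨h1, h2⟩ | ⟨h1, h2⟩ | ⟨h1, h2⟩ | ⟨h1, h2⟩ | ⟨h1, h2⟩ | ⟨h1, h2⟩ |
      ⟨h1, h2⟩ | ⟨h1, h2⟩ | ⟨h1, h2⟩ | ⟨h1, h2⟩ | ⟨h1, h2⟩ <;> subst h1 <;> subst h2 <;>
    refine ⟨hboundgen _ (by push_cast; nlinarith [halpha_gt])
      (by push_cast; nlinarith [hXgt, halpha_gt, halpha_lt]), ?_⟩
    · exact ⟨0, by rw [hnrmN]; push_cast; norm_num⟩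
    · exact ⟨3, by rw [hnrmN]; push_cast; norm_num⟩
    · exact ⟨6, by rw [hnrmN]; push_cast; norm_num⟩
    · exact ⟨0, by rw [hnrmN]; push_cast; norm_num⟩
    · exact ⟨0, by rw [hnrmN]; push_cast; norm_num⟩
    · exact ⟨0, by rw [hnrmN]; push_cast; norm_num⟩
    · exact ⟨0, by rw [hnrmN]; push_cast; norm_num⟩
    · exact ⟨0, by rw [hnrmN]; push_cast; norm_num⟩
    · exact ⟨1, by rw [hnrmN]; push_cast; norm_num⟩
    · exact ⟨1, by rw [hnrmN]; push_cast; norm_num⟩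
    · exact ⟨3, by rw [hnrmN]; push_cast; norm_num⟩
    · exact ⟨3, by rw [hnrmN]; push_cast; norm_num⟩
end

section
/- Let C be a ribbon finite tensor category over a field K with twist θ, and let A be a commutative algebra in C. Decompose A = ⊕_{t∈K^×} A_t where A_t is the generalized eigenobject of θ_A with eigenvalue t. Then this decomposition is a grading of A by the multiplicative group K^×: the multiplication maps A_t ⊗ A_s into A_{ts}. -/
/-!
Commutativity of `A` and the ribbon axiom give `θ ∘ m = m ∘ (θ ⊗ θ)`. On `A_t ⊗ A_s` the
endomorphism `θ ⊗ θ` is the product of the commuting endomorphisms `θ ▷ A_s` and `A_t ◁ θ`,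
which have the single generalized eigenvalues `t` and `s`, so `θ ⊗ θ - ts` is nilpotent there.
Hence `θ - ts` is nilpotent on the image of `A_t ⊗ A_s` under `m`, and maximality of `A_{ts}`
puts that image inside `A_{ts}`.
-/

open CategoryTheory CategoryTheory.MonoidalCategory CategoryTheory.Limits

theorem Commute.isNilpotent_mul_sub_smul_one {R A : Type*} [CommRing R] [Ring A] [Algebra R A]
    {a b : A} (hab : Commute a b) {t s : R} (ha : IsNilpotent (a - t • 1))
    (hb : IsNilpotent (b - s • 1)) : IsNilpotent (a * b - (t * s) • 1) := by
  have hsplit : a * b - (t * s) • 1 = (a - t • 1) * b + t • (b - s • 1) := by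
    simp only [sub_mul, smul_sub, smul_mul_assoc, one_mul, smul_smul]
    abel
  have hab' : Commute (a - t • 1) b := hab.sub_left ((Commute.one_left b).smul_left t)
  have hbb' : Commute b (b - s • 1) :=
    (Commute.refl b).sub_right ((Commute.one_right b).smul_right s)
  rw [hsplit]
  refine Commute.isNilpotent_add ?_ (hab'.isNilpotent_mul_right ha) (hb.smul t)
  exact ((hab'.sub_right ((Commute.one_right _).smul_right s)).mul_left hbb').smul_right t

namespace CategoryTheory

open Preadditive Linear

variable {C : Type*} [Category C]

theorem Mon.twist_tensorHom_comp_mul [MonoidalCategory C] [BraidedCategory C]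
    (θ : ∀ X : C, X ⟶ X) (θnat : ∀ {X Y : C} (f : X ⟶ Y), θ X ≫ f = f ≫ θ Y)
    (θribbon : ∀ X Y : C, θ (X ⊗ Y) = (θ X ⊗ₘ θ Y) ≫ (β_ X Y).hom ≫ (β_ Y X).hom)
    (M : Mon C) (hcomm : (β_ M.X M.X).hom ≫ M.mon.mul = M.mon.mul) :
    (θ M.X ⊗ₘ θ M.X) ≫ M.mon.mul = M.mon.mul ≫ θ M.X := by
  rw [← θnat, θribbon, Category.assoc, Category.assoc, hcomm, hcomm]

variable [Preadditive C]

theorem IsNilpotent.of_epi_comp_eq_comp {X Y : C} {p : Y ⟶ X} [Epi p] {u : End X} {v : End Y}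
    (h : p ≫ u = v ≫ p) (hv : IsNilpotent v) : IsNilpotent u := by
  obtain ⟨n, hn⟩ := hv
  have hpow : ∀ k : ℕ, p ≫ (u ^ k) = (v ^ k) ≫ p := by
    intro k
    induction k with
    | zero => simp [End.one_def]
    | succ k ih =>
      rw [pow_succ, pow_succ, End.mul_def, End.mul_def, ← Category.assoc, h, Category.assoc, ih,
        Category.assoc]
  exact ⟨n, (cancel_epi p).1 (by rw [hpow, hn, zero_comp, comp_zero])⟩

variable {K : Type*} [CommRing K] [Linear K C]

theorem End.sub_smul_one_comp {X Y : C} (e : End Y) (t : K) (f : Y ⟶ X) :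
    (e - t • 1) ≫ f = e ≫ f - t • f := by
  rw [sub_comp, End.one_def, smul_comp, Category.id_comp]

theorem IsNilpotent.mapEnd_sub_smul_one {Y : C} {e : End Y} {t : K}
    (he : IsNilpotent (e - t • 1)) {D : Type*} [Category D] [Preadditive D] [Linear K D]
    (F : C ⥤ D) [F.Additive] [F.Linear K] : IsNilpotent (F.mapEnd Y e - t • 1) := by
  obtain ⟨n, hn⟩ := he
  have hmap : F.mapEnd Y e - t • 1 = F.mapEnd Y (e - t • 1) := by
    rw [Functor.mapEnd_apply, Functor.mapEnd_apply, F.map_sub, F.map_smul, End.one_def, End.one_def,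
      F.map_id]
  exact ⟨n, by rw [hmap, ← map_pow, hn]; exact F.map_zero _ _⟩

/-- `f` factors through the generalized `t`-eigenobject of `φ` (see `mapsToGenEigen_iff`); this
form, with the eigenvalue carried by a lift `e` of `φ`, is the one stable under `⊗`. -/
def MapsToGenEigen {X Y : C} (φ : X ⟶ X) (t : K) (f : Y ⟶ X) : Prop :=
  ∃ e : End Y, IsNilpotent (e - t • 1) ∧ e ≫ f = f ≫ φ

variable {X Y Z : C} {φ : X ⟶ X} {t : K} {f : Y ⟶ X}

theorem mapsToGenEigen_iff :
    MapsToGenEigen φ t f ↔ ∃ u : End Y, IsNilpotent u ∧ u ≫ f = f ≫ (φ - t • 𝟙 X) := by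
  rw [comp_sub, comp_smul, Category.comp_id]
  constructor
  · rintro ⟨e, he, hef⟩
    exact ⟨e - t • 1, he, by rw [End.sub_smul_one_comp, hef]⟩
  · rintro ⟨u, hu, huf⟩
    refine ⟨u + t • 1, by rwa [add_sub_cancel_right], ?_⟩
    rw [← sub_left_inj (a := t • f), ← End.sub_smul_one_comp, add_sub_cancel_right, huf]

theorem MapsToGenEigen.comp (hf : MapsToGenEigen φ t f) {ψ : Z ⟶ Z} {g : X ⟶ Z}
    (hg : φ ≫ g = g ≫ ψ) : MapsToGenEigen ψ t (f ≫ g) := by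
  obtain ⟨e, he, hef⟩ := hf
  exact ⟨e, he, by rw [← Category.assoc, hef, Category.assoc, hg, Category.assoc]⟩

theorem MapsToGenEigen.imageSubobject_arrow [HasImages C] [HasImageMaps C] [HasEqualizers C]
    (hf : MapsToGenEigen φ t f) : MapsToGenEigen φ t (imageSubobject f).arrow := by
  obtain ⟨e, he, hef⟩ := hf
  let sq : Arrow.mk f ⟶ Arrow.mk f := Arrow.homMk' e φ hef
  have harrow : imageSubobjectMap sq ≫ (imageSubobject f).arrow =
      (imageSubobject f).arrow ≫ φ := imageSubobjectMap_arrow sq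
  refine ⟨imageSubobjectMap sq, IsNilpotent.of_epi_comp_eq_comp
    (p := factorThruImageSubobject f) ((cancel_mono (imageSubobject f).arrow).1 ?_) he, harrow⟩
  rw [Category.assoc, End.sub_smul_one_comp, harrow, End.sub_smul_one_comp, comp_sub, sub_comp,
    comp_smul, smul_comp, ← Category.assoc, imageSubobject_arrow_comp, Category.assoc,
    imageSubobject_arrow_comp, hef]

theorem MapsToGenEigen.tensorHom [MonoidalCategory C] [MonoidalPreadditive C]
    [MonoidalLinear K C] {X' Y' : C} {ψ : X' ⟶ X'} {s : K} {g : Y' ⟶ X'}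
    (hf : MapsToGenEigen φ t f) (hg : MapsToGenEigen ψ s g) :
    MapsToGenEigen (φ ⊗ₘ ψ) (t * s) (f ⊗ₘ g) := by
  obtain ⟨e, he, hef⟩ := hf
  obtain ⟨e', he', hge'⟩ := hg
  refine ⟨e ⊗ₘ e', ?_, by rw [tensorHom_comp_tensorHom, hef, hge', tensorHom_comp_tensorHom]⟩
  let a : End (Y ⊗ Y') := (tensorRight Y').mapEnd Y e
  let b : End (Y ⊗ Y') := (tensorLeft Y).mapEnd Y' e'
  have hsplit : e ⊗ₘ e' = b * a := MonoidalCategory.tensorHom_def _ _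
  have hcomm : Commute b a := (whisker_exchange e e').symm
  rw [hsplit, mul_comm t]
  exact hcomm.isNilpotent_mul_sub_smul_one (he'.mapEnd_sub_smul_one (tensorLeft Y))
    (he.mapEnd_sub_smul_one (tensorRight Y'))

end CategoryTheory

theorem stmt18_general {K : Type} [Field K]
    {C : Type} [Category C] [Abelian C] [Linear K C]
    [MonoidalCategory C] [MonoidalPreadditive C] [MonoidalLinear K C]
    [BraidedCategory C]
    (θ : ∀ X : C, X ⟶ X)
    (θnat : ∀ {X Y : C} (f : X ⟶ Y), θ X ≫ f = f ≫ θ Y)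
    (θribbon : ∀ X Y : C,
      θ (X ⊗ Y) = (θ X ⊗ₘ θ Y) ≫ (β_ X Y).hom ≫ (β_ Y X).hom)
    (A : Mon C)
    (hcomm : (β_ A.X A.X).hom ≫ A.mon.mul = A.mon.mul)
    (Asub : Kˣ → Subobject A.X)
    (heigen : ∀ t : Kˣ, ∃ (u : CategoryTheory.End ((Asub t) : C)) (n : ℕ),
      u ^ n = 0 ∧ u ≫ (Asub t).arrow = (Asub t).arrow ≫ (θ A.X - (t : K) • 𝟙 A.X))
    (hmax : ∀ (t : Kˣ) (S : Subobject A.X),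
      (∃ (u : CategoryTheory.End (S : C)) (n : ℕ),
        u ^ n = 0 ∧ u ≫ S.arrow = S.arrow ≫ (θ A.X - (t : K) • 𝟙 A.X)) →
      S ≤ Asub t) :
    ∀ t s : Kˣ, ∃ f : ((((Asub t) : C) ⊗ ((Asub s) : C) : C)) ⟶ ((Asub (t * s)) : C),
      f ≫ (Asub (t * s)).arrow = ((Asub t).arrow ⊗ₘ (Asub s).arrow) ≫ A.mon.mul := by
  intro t s
  have hAsub (r : Kˣ) : MapsToGenEigen (θ A.X) (r : K) (Asub r).arrow := by
    obtain ⟨u, n, hu, hcomp⟩ := heigen r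
    exact mapsToGenEigen_iff.2 ⟨u, ⟨n, hu⟩, hcomp⟩
  set g := ((Asub t).arrow ⊗ₘ (Asub s).arrow) ≫ A.mon.mul
  have himage : MapsToGenEigen (θ A.X) ((t * s : Kˣ) : K) (imageSubobject g).arrow := by
    rw [Units.val_mul]
    exact (((hAsub t).tensorHom (hAsub s)).comp
      (Mon.twist_tensorHom_comp_mul θ θnat θribbon A hcomm)).imageSubobject_arrow
  obtain ⟨u, ⟨n, hu⟩, hcomp⟩ := mapsToGenEigen_iff.1 himage
  have hle : imageSubobject g ≤ Asub (t * s) := hmax (t * s) _ ⟨u, n, hu, hcomp⟩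
  exact ⟨factorThruImageSubobject g ≫ Subobject.ofLE _ _ hle, by simp [g]⟩

/-- Let `C` be a ribbon finite tensor category over a field `K`, with twist
`θ` (a natural automorphism of the identity satisfying
`θ_{X⊗Y} = (θ_X ⊗ θ_Y) ∘ c_{Y,X} ∘ c_{X,Y}`), and let `A` be a commutative
algebra in `C`.  For `t ∈ K^×` let `A_t ⊆ A` be the generalized eigenobject
of `θ_A` with eigenvalue `t`, i.e. the largest subobject on which
`θ_A − t·id` is nilpotent.  Then the decomposition `A = ⊕_t A_t` is a grading
of `A` by the group `K^×`: the multiplication maps `A_t ⊗ A_s` into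
`A_{t·s}`. -/
theorem stmt18 {K : Type} [Field K]
    {C : Type} [Category C] [Abelian C] [Linear K C]
    [MonoidalCategory C] [MonoidalPreadditive C] [MonoidalLinear K C]
    [BraidedCategory C] [RigidCategory C]
    (θ : ∀ X : C, X ⟶ X) (θiso : ∀ X : C, IsIso (θ X))
    (θnat : ∀ {X Y : C} (f : X ⟶ Y), θ X ≫ f = f ≫ θ Y)
    (θribbon : ∀ X Y : C,
      θ (X ⊗ Y) = (θ X ⊗ₘ θ Y) ≫ (β_ X Y).hom ≫ (β_ Y X).hom)
    (A : Mon C)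
    (hcomm : (β_ A.X A.X).hom ≫ A.mon.mul = A.mon.mul)
    (Asub : Kˣ → Subobject A.X)
    (heigen : ∀ t : Kˣ, ∃ (u : CategoryTheory.End ((Asub t) : C)) (n : ℕ),
      u ^ n = 0 ∧ u ≫ (Asub t).arrow = (Asub t).arrow ≫ (θ A.X - (t : K) • 𝟙 A.X))
    (hmax : ∀ (t : Kˣ) (S : Subobject A.X),
      (∃ (u : CategoryTheory.End (S : C)) (n : ℕ),
        u ^ n = 0 ∧ u ≫ S.arrow = S.arrow ≫ (θ A.X - (t : K) • 𝟙 A.X)) →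
      S ≤ Asub t) :
    ∀ t s : Kˣ, ∃ f : ((((Asub t) : C) ⊗ ((Asub s) : C) : C)) ⟶ ((Asub (t * s)) : C),
      f ≫ (Asub (t * s)).arrow = ((Asub t).arrow ⊗ₘ (Asub s).arrow) ≫ A.mon.mul :=
  stmt18_general θ θnat θribbon A hcomm Asub heigen hmax
end
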